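/- Let δ > 0 and d ≥ 1. The soft-max function PLSoftMax^δ is δ-approximate in the worst case: for every x ∈ ℝ^d and every i ∈ [d], if PLSoftMax^δ(x)_i > 0 then x_i ≥ max_j x_j − δ. -/

import Mathlib

open Finset
open scoped Classical

/-- The soft-max matrix `SM_{(k,d)}` (1-indexed description): `m_{11} = (k−1)/k`;
`m_{ii} = 1/i` for `2 ≤ i ≤ k`; `m_{i1} = −1/k` for `2 ≤ i ≤ k`;
`m_{ij} = −1/(j(j−1))` for `1 ≤ i < j ≤ k`, `j ≥ 2`; all other entries `0`. -/
noncomputable def SM (k d : ℕ) : Matrix (Fin d) (Fin d) ℝ :=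
  Matrix.of fun i j =>
    if k < (i : ℕ) + 1 ∨ k < (j : ℕ) + 1 then 0
    else if (i : ℕ) + 1 = 1 ∧ (j : ℕ) + 1 = 1 then ((k : ℝ) - 1) / k
    else if (i : ℕ) = (j : ℕ) then 1 / ((i : ℕ) + 1 : ℝ)
    else if (j : ℕ) + 1 = 1 then -1 / (k : ℝ)
    else if (i : ℕ) < (j : ℕ) then
      -1 / ((((j : ℕ) + 1 : ℕ) : ℝ) * (((j : ℕ) + 1 : ℝ) - 1))
    else 0

/-- The vector `u^{(k)} ∈ ℝ^d`, `u^{(k)}_i = 1/k` for the first `k` coordinates, else `0`. -/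
noncomputable def uvec (k d : ℕ) : Fin d → ℝ :=
  fun i => if (i : ℕ) + 1 ≤ k then 1 / (k : ℝ) else 0

/-- The permutation matrix `P_π`, with `1`'s at entries `(i, π(i))`. -/
def permMat (d : ℕ) (π : Equiv.Perm (Fin d)) : Matrix (Fin d) (Fin d) ℝ :=
  Matrix.of fun i j => if j = π i then 1 else 0

/-- `π` is a sorting permutation for `x`, i.e. `x_{π(1)} ≥ x_{π(2)} ≥ ⋯ ≥ x_{π(d)}`. -/
def Sorts {d : ℕ} (x : Fin d → ℝ) (π : Equiv.Perm (Fin d)) : Prop :=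
  ∀ i j : Fin d, i ≤ j → x (π j) ≤ x (π i)

/-- `k_x`: the largest `k ∈ {1,…,d}` with `x_{π(1)} − x_{π(k)} ≤ δ`. -/
noncomputable def kx {d : ℕ} (δ : ℝ) (x : Fin d → ℝ) (π : Equiv.Perm (Fin d)) : ℕ :=
  sSup {k : ℕ | 1 ≤ k ∧ k ≤ d ∧
    ∃ h0 : 0 < d, ∃ h : k - 1 < d, x (π ⟨0, h0⟩) - x (π ⟨k - 1, h⟩) ≤ δ}

/-- `PLSoftMax^δ(x) = (1/δ)·P_π⁻¹·SM_{(k_x,d)}·P_π·x + P_π⁻¹·u^{(k_x)}`,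
computed using the sorting permutation `π` of `x`. -/
noncomputable def PLSoftMax {d : ℕ} (δ : ℝ) (x : Fin d → ℝ)
    (π : Equiv.Perm (Fin d)) : Fin d → ℝ :=
  (1 / δ) • ((permMat d π⁻¹).mulVec
      ((SM (kx δ x π) d).mulVec ((permMat d π).mulVec x)))
    + (permMat d π⁻¹).mulVec (uvec (kx δ x π) d)

/-!
Only the first `k_x` sorted coordinates can receive positive mass: the rows of `SM_{(k,d)}`
and the entries of `u^{(k)}` beyond `k` vanish. Each of those coordinates is at least
`x_{π(k_x)}`, which by the choice of `k_x` lies within `δ` of `x_{π(1)} = max_j x_j`.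
-/

lemma permMat_mulVec {d : ℕ} (σ : Equiv.Perm (Fin d)) (v : Fin d → ℝ) :
    (permMat d σ).mulVec v = v ∘ σ := by
  funext i
  simp [permMat, Matrix.mulVec, dotProduct, ite_mul, Finset.sum_ite_eq']

lemma SM_apply_eq_zero_of_le {k d : ℕ} {i : Fin d} (hi : k ≤ i) (j : Fin d) :
    SM k d i j = 0 := by
  simp only [SM, Matrix.of_apply, if_pos (Or.inl (show k < (i : ℕ) + 1 by omega))]

lemma uvec_apply_eq_zero_of_le {k d : ℕ} {i : Fin d} (hi : k ≤ i) : uvec k d i = 0 := by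
  simp [uvec, show ¬ (i : ℕ) + 1 ≤ k by omega]

lemma PLSoftMax_apply {d : ℕ} (δ : ℝ) (x : Fin d → ℝ) (π : Equiv.Perm (Fin d)) (i : Fin d) :
    PLSoftMax δ x π i =
      (1 / δ) * (SM (kx δ x π) d).mulVec (x ∘ π) (π⁻¹ i) + uvec (kx δ x π) d (π⁻¹ i) := by
  simp only [PLSoftMax, Pi.add_apply, Pi.smul_apply, smul_eq_mul, permMat_mulVec,
    Function.comp_apply]

lemma PLSoftMax_apply_eq_zero_of_kx_le {d : ℕ} {δ : ℝ} {x : Fin d → ℝ}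
    {π : Equiv.Perm (Fin d)} {i : Fin d} (hi : kx δ x π ≤ π⁻¹ i) :
    PLSoftMax δ x π i = 0 := by
  rw [PLSoftMax_apply, uvec_apply_eq_zero_of_le hi]
  simp only [Matrix.mulVec, dotProduct, SM_apply_eq_zero_of_le hi, zero_mul, sum_const_zero,
    mul_zero, add_zero]

lemma exists_sub_le_of_kx_ne_zero {d : ℕ} {δ : ℝ} {x : Fin d → ℝ} {π : Equiv.Perm (Fin d)}
    (hk : kx δ x π ≠ 0) :
    ∃ (h0 : 0 < d) (h : kx δ x π - 1 < d),
      x (π ⟨0, h0⟩) - x (π ⟨kx δ x π - 1, h⟩) ≤ δ := by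
  have hne : {k : ℕ | 1 ≤ k ∧ k ≤ d ∧
      ∃ h0 : 0 < d, ∃ h : k - 1 < d, x (π ⟨0, h0⟩) - x (π ⟨k - 1, h⟩) ≤ δ}.Nonempty := by
    by_contra hempty
    exact hk (by rw [kx, Set.not_nonempty_iff_eq_empty.mp hempty, csSup_empty]; rfl)
  exact (Nat.sSup_mem hne ⟨d, fun _ hn => hn.2.1⟩).2.2

lemma Sorts.iSup_eq {d : ℕ} {x : Fin d → ℝ} {π : Equiv.Perm (Fin d)} (hπ : Sorts x π)
    (h0 : 0 < d) : ⨆ j, x j = x (π ⟨0, h0⟩) := by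
  have : Nonempty (Fin d) := ⟨⟨0, h0⟩⟩
  refine le_antisymm (ciSup_le fun j => ?_) (le_ciSup (Finite.bddAbove_range x) _)
  simpa using hπ ⟨0, h0⟩ (π⁻¹ j) (Fin.le_def.mpr (Nat.zero_le _))

theorem plsoftmax_worst_case_approx_general (d : ℕ) (δ : ℝ)
    (x : Fin d → ℝ) (π : Equiv.Perm (Fin d)) (hπ : Sorts x π) (i : Fin d)
    (hpos : 0 < PLSoftMax δ x π i) :
    x i ≥ (⨆ j, x j) - δ := by
  have hik : ((π⁻¹ i : Fin d) : ℕ) < kx δ x π := by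
    by_contra! h
    exact hpos.ne' (PLSoftMax_apply_eq_zero_of_kx_le h)
  obtain ⟨h0, hk, hgap⟩ := exists_sub_le_of_kx_ne_zero (Nat.ne_zero_of_lt hik)
  calc (⨆ j, x j) - δ = x (π ⟨0, h0⟩) - δ := by rw [hπ.iSup_eq h0]
    _ ≤ x (π ⟨kx δ x π - 1, hk⟩) := by linarith
    _ ≤ x (π (π⁻¹ i)) := hπ _ _ (Fin.le_def.mpr (by simp only; omega))
    _ = x i := by simp

/-- `PLSoftMax^δ` is `δ`-approximate in the worst case: if a coordinate receives
positive probability, then its value is within `δ` of the maximum. -/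
theorem plsoftmax_worst_case_approx (d : ℕ) (hd : 1 ≤ d) (δ : ℝ) (hδ : 0 < δ)
    (x : Fin d → ℝ) (π : Equiv.Perm (Fin d)) (hπ : Sorts x π) (i : Fin d)
    (hpos : 0 < PLSoftMax δ x π i) :
    x i ≥ (⨆ j, x j) - δ :=
  plsoftmax_worst_case_approx_general d δ x π hπ i hpos
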